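/- Let B = arctan(24/7). For every isosceles hyperbolic triangle with angles α, α, γ where B ≤ γ < π/2 and 2α + γ < π, the strong triangle inequality fails strictly: a + b < c + h. In the special case γ = B, this reduces to showing that the inequality (cos²α + cos B)/(cos B + 1 − sin B) − 1 < (5/3)cos α (where cosh h = cos α / sin(B/2) = (5/3)cos α) forces cos α ≤ 3/5, which contradicts 2α + B < π; i.e., for all α with 0 < α and 2α + B < π, (cos²α + 7/25)/(7/25 + 1 − 24/25) − 1 ≥ (5/3)cos α. -/
import Mathlib


open Real

set_option maxHeartbeats 1000000

private lemma sqeq' {x y : ℝ} (hx : 0 ≤ x) (hy : 0 ≤ y) (h : x^2 = y^2) : x = y := by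
  have h1 := Real.sqrt_sq hx
  have h2 := Real.sqrt_sq hy
  rw [← h1, ← h2, h]

private lemma Gpos' (u w z r : ℝ) (hw0 : 0 < w) (hz0 : 0 < z)
    (hw18 : 18/25 ≤ w^2) (hw1 : w^2 ≤ 1) (hz2 : z^2 = 2 - w^2) (hr2 : r^2 = 2)
    (hwu : w < r*u) :
    0 < w*(u^2-1) + r*u*(w^2-2) + z*w*(r*u+w) := by
  have he : (z*w)^2 = (2-w^2)*w^2 := by rw [mul_pow, hz2]
  have hzw2 : (24/25:ℝ)^2 ≤ (z*w)^2 := by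
    nlinarith [mul_nonneg (sub_nonneg.2 hw18) (sub_nonneg.2 hw1)]
  have hzw : 24/25 ≤ z*w := by nlinarith [mul_pos hz0 hw0]
  have hA : 0 < r*u - w := by linarith
  have hB : 0 < r*u*w + 3*w^2 + 2*(z*w) - 4 := by nlinarith [mul_pos hA hw0]
  have hC : 0 ≤ 3*w^3 + 4*(z*w)*w - 6*w := by
    nlinarith [mul_nonneg hw0.le (show (0:ℝ) ≤ 3*w^2 + 4*(z*w) - 6 by linarith)]
  have hid : 2*(w*(u^2-1) + r*u*(w^2-2) + z*w*(r*u+w))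
      = (r*u-w)*(r*u*w + 3*w^2 + 2*(z*w) - 4) + (3*w^3 + 4*(z*w)*w - 6*w) := by
    linear_combination (-(u^2*w))*hr2
  nlinarith [mul_pos hA hB]

private lemma cos_arctan_247 : Real.cos (Real.arctan (24/7)) = 7/25 := by
  rw [Real.cos_arctan, show (1:ℝ) + (24/7)^2 = (25/7)^2 by norm_num,
    Real.sqrt_sq (by norm_num : (0:ℝ) ≤ 25/7)]
  norm_num

private lemma arctan_247_pos : (0:ℝ) < Real.arctan (24/7) := by
  have := Real.arctan_strictMono (show (0:ℝ) < 24/7 by norm_num)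
  rwa [Real.arctan_zero] at this

theorem isosceles_fails :
    (∀ α γ a b c h : ℝ, Real.arctan (24 / 7) ≤ γ → γ < π / 2 → 0 < α →
      2 * α + γ < π →
      0 ≤ a → 0 ≤ b → 0 ≤ c → 0 ≤ h →
      Real.cosh a = (Real.cos α * Real.cos γ + Real.cos α) / (Real.sin α * Real.sin γ) →
      Real.cosh b = (Real.cos α * Real.cos γ + Real.cos α) / (Real.sin α * Real.sin γ) →
      Real.cosh c = (Real.cos α * Real.cos α + Real.cos γ) / (Real.sin α * Real.sin α) →
      Real.sinh h = Real.sinh a * Real.sin α →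
      a + b < c + h) ∧
    (∀ α : ℝ, 0 < α → 2 * α + Real.arctan (24 / 7) < π →
      (Real.cos α ^ 2 + 7 / 25) / (7 / 25 + 1 - 24 / 25) - 1 ≥ (5 / 3) * Real.cos α) := by
  constructor
  · intro α γ a b c h hγB hγ2 hα hsum ha0 hb0 hc0 hh0 hca hcb hcc hsh
    have hπ := Real.pi_pos
    have hB0 : (0:ℝ) < Real.arctan (24/7) := arctan_247_pos
    have hγ0 : 0 < γ := lt_of_lt_of_le hB0 hγB
    have hγπ : γ < π := by linarith
    have hv0 : 0 < Real.cos γ := Real.cos_pos_of_mem_Ioo ⟨by linarith, hγ2⟩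
    have hvB : Real.cos γ ≤ 7/25 := by
      have := Real.cos_le_cos_of_nonneg_of_le_pi hB0.le hγπ.le hγB
      rwa [cos_arctan_247] at this
    have hs0 : 0 < Real.sin γ := Real.sin_pos_of_pos_of_lt_pi hγ0 hγπ
    have hα2 : α < π/2 := by linarith
    have hu0 : 0 < Real.cos α := Real.cos_pos_of_mem_Ioo ⟨by linarith, hα2⟩
    have hp0 : 0 < Real.sin α := Real.sin_pos_of_pos_of_lt_pi hα (by linarith)
    -- 2 cos²α > 1 - cos γ
    have hhalf : Real.sin (γ/2) < Real.cos α := by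
      have h1 : Real.cos ((π - γ)/2) < Real.cos α :=
        Real.cos_lt_cos_of_nonneg_of_le_pi hα.le (by linarith) (by linarith)
      rwa [show (π - γ)/2 = π/2 - γ/2 by ring, Real.cos_pi_div_two_sub] at h1
    have hsinhalf : 0 ≤ Real.sin (γ/2) :=
      Real.sin_nonneg_of_nonneg_of_le_pi (by linarith) (by linarith)
    have hsinhalfsq : Real.sin (γ/2)^2 = (1 - Real.cos γ)/2 := by
      have hc2 : Real.cos γ = 2 * Real.cos (γ/2)^2 - 1 := by
        rw [show γ = 2*(γ/2) by ring, Real.cos_two_mul]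
        ring_nf
      have hss := Real.sin_sq (γ/2)
      linarith
    have h2u : 1 - Real.cos γ < 2 * Real.cos α^2 := by
      have hsq := mul_lt_mul'' hhalf hhalf hsinhalf hsinhalf
      have e1 : Real.cos α^2 = Real.cos α * Real.cos α := by ring
      have e2 : Real.sin (γ/2)^2 = Real.sin (γ/2) * Real.sin (γ/2) := by ring
      linarith
    -- a = b, reduce goal to a + a < c + h
    have hab : a = b := by
      apply Real.sinh_injective
      apply sqeq' (Real.sinh_nonneg_iff.2 ha0) (Real.sinh_nonneg_iff.2 hb0)
      rw [Real.sinh_sq, Real.sinh_sq, hca, hcb]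
    rw [← hab]
    -- notation
    set u := Real.cos α with hu_def
    set v := Real.cos γ with hv_def
    set p := Real.sin α with hp_def
    set s := Real.sin γ with hs_def
    set w := Real.sqrt (1 - v) with hw_def
    set z := Real.sqrt (1 + v) with hz_def
    set r := Real.sqrt 2 with hr_def
    set t := Real.sqrt (2*u^2 + v - 1) with ht_def
    have hu1 : u < 1 := by
      have := Real.cos_lt_cos_of_nonneg_of_le_pi (le_refl (0:ℝ)) (by linarith : α ≤ π) hα
      rwa [Real.cos_zero] at this
    have hw2 : w^2 = 1 - v := Real.sq_sqrt (by linarith)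
    have hz2' : z^2 = 1 + v := Real.sq_sqrt (by linarith)
    have hr2 : r^2 = 2 := Real.sq_sqrt (by norm_num)
    have ht2 : t^2 = 2*u^2 + v - 1 := Real.sq_sqrt (by linarith)
    have hw0 : 0 < w := Real.sqrt_pos.2 (by linarith)
    have hz0 : 0 < z := Real.sqrt_pos.2 (by linarith)
    have hr0 : 0 < r := Real.sqrt_pos.2 (by norm_num)
    have ht0 : 0 < t := Real.sqrt_pos.2 (by linarith)
    have hp2 : p^2 = 1 - u^2 := Real.sin_sq α
    have hz2 : z^2 = 2 - w^2 := by rw [hz2', hw2]; ring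
    have ht2' : t^2 = 2*u^2 - w^2 := by rw [ht2, hw2]; ring
    have hv' : v = 1 - w^2 := by linarith
    have hs2 : s^2 = 1 - v^2 := Real.sin_sq γ
    have hs_wz : s = w * z := by
      apply sqeq' hs0.le (by positivity)
      rw [hs2, mul_pow, hw2, hz2']
      ring
    have hwu : w < r * u := by
      have h1 : w^2 < (r*u)^2 := by
        rw [mul_pow, hr2, hw2]; linarith
      exact lt_of_pow_lt_pow_left₀ 2 (by positivity) h1
    have hp_ne : p ≠ 0 := ne_of_gt hp0
    have hps : p * s ≠ 0 := by positivity
    -- product forms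
    have hCa : Real.cosh a * (p*(w*z)) = u*(2 - w^2) := by
      rw [hca, ← hs_wz, div_mul_cancel₀ _ hps, hv']
      ring
    have hCc : Real.cosh c * p^2 = u^2 + 1 - w^2 := by
      rw [hcc, hv']
      field_simp
      ring
    have hSa2 : Real.sinh a^2 * (p^2*w^2) = t^2 := by
      have hz2ne : z^2 ≠ 0 := by positivity
      have key : Real.sinh a^2 * (p^2*w^2) * z^2 = t^2 * z^2 := by
        rw [Real.sinh_sq]
        linear_combination (Real.cosh a*(p*(w*z)) + u*(2-w^2)) * hCa
          + (-t^2 - w^2*p^2) * hz2 + (-2 + w^2) * ht2' + (-2*w^2 + w^4) * hp2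
      exact mul_right_cancel₀ hz2ne key
    have hSh : Real.sinh h * w = t := by
      apply sqeq' (mul_nonneg (Real.sinh_nonneg_iff.2 hh0) hw0.le) ht0.le
      rw [hsh]
      linear_combination hSa2
    have hCh : Real.cosh h * w = r * u := by
      apply sqeq' (mul_nonneg (Real.cosh_pos h).le hw0.le) (mul_nonneg hr0.le hu0.le)
      rw [mul_pow, Real.cosh_sq]
      linear_combination (Real.sinh h*w + t)*hSh + ht2' - u^2*hr2
    have hSc : Real.sinh c * p^2 = t * z := by
      apply sqeq' (mul_nonneg (Real.sinh_nonneg_iff.2 hc0) (by positivity)) (by positivity)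
      rw [mul_pow, Real.sinh_sq]
      linear_combination (Real.cosh c*p^2 + (u^2+1-w^2))*hCc + (-t^2)*hz2
        + (-2+w^2)*ht2' + (-1-p^2+u^2)*hp2
    -- the main polynomial inequality
    have hw18 : 18/25 ≤ w^2 := by rw [hw2]; linarith
    have hw1 : w^2 ≤ 1 := by rw [hw2]; linarith
    have hG := Gpos' u w z r hw0 hz0 hw18 hw1 hz2 hr2 hwu
    have hNpos : 0 < r*u*w*z^2*(u^2+1-w^2) + t^2*z^3*w - u^2*(2-w^2)^2 - t^2*z^2 := by
      have hfact : r*u*w*z^2*(u^2+1-w^2) + t^2*z^3*w - u^2*(2-w^2)^2 - t^2*z^2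
          = (r*u - w) * (w*(u^2-1) + r*u*(w^2-2) + z*w*(r*u+w)) * z^2 := by
        linear_combination
          (-t^2 + w*z*t^2 - w^2 + w^3*z + 2*u^2*r^2 - u^2*w*z*r^2 + u^2*w^2 - u^2*w^2*r^2)*hz2
          + (-2 + 2*w*z + w^2 - w^3*z)*ht2'
          + (4*u^2 - 2*u^2*w*z - 4*u^2*w^2 + u^2*w^3*z + u^2*w^4)*hr2
      rw [hfact]
      exact mul_pos (mul_pos (sub_pos.2 hwu) hG) (by positivity)
    have hD : (0:ℝ) < p^2*w^2*z^2 := by positivity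
    have key : (Real.cosh c * Real.cosh h + Real.sinh c * Real.sinh h
        - (Real.cosh a * Real.cosh a + Real.sinh a * Real.sinh a)) * (p^2*w^2*z^2)
        = r*u*w*z^2*(u^2+1-w^2) + t^2*z^3*w - u^2*(2-w^2)^2 - t^2*z^2 := by
      linear_combination (w*z^2*Real.cosh c*p^2)*hCh + (w*z^2*r*u)*hCc
        + (w*z^2*Real.sinh c*p^2)*hSh + (w*z^2*t)*hSc
        - (Real.cosh a*(p*(w*z)) + u*(2-w^2))*hCa - z^2*hSa2
    have hfinal : Real.cosh a * Real.cosh a + Real.sinh a * Real.sinh a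
        < Real.cosh c * Real.cosh h + Real.sinh c * Real.sinh h := by
      have h1 := mul_div_cancel_right₀ (Real.cosh c * Real.cosh h + Real.sinh c * Real.sinh h
        - (Real.cosh a * Real.cosh a + Real.sinh a * Real.sinh a)) (ne_of_gt hD)
      rw [key] at h1
      have h2 : 0 < Real.cosh c * Real.cosh h + Real.sinh c * Real.sinh h
          - (Real.cosh a * Real.cosh a + Real.sinh a * Real.sinh a) := by
        rw [← h1]
        exact div_pos hNpos hD
      linarith
    have hcc2 : Real.cosh (a + a) < Real.cosh (c + h) := by
      rw [Real.cosh_add, Real.cosh_add]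
      exact hfinal
    have habs := Real.cosh_lt_cosh.1 hcc2
    rw [abs_of_nonneg (by linarith : (0:ℝ) ≤ a + a),
      abs_of_nonneg (by linarith : (0:ℝ) ≤ c + h)] at habs
    exact habs
  · intro α hα hsum
    have hπ := Real.pi_pos
    have hB0 : (0:ℝ) < Real.arctan (24/7) := arctan_247_pos
    have hB2 : Real.arctan (24/7) < π/2 := Real.arctan_lt_pi_div_two _
    set B := Real.arctan (24/7) with hB_def
    have hα2 : α < (π - B)/2 := by linarith
    have h1 : Real.cos ((π - B)/2) < Real.cos α :=
      Real.cos_lt_cos_of_nonneg_of_le_pi hα.le (by linarith) hα2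
    have h2 : Real.cos ((π - B)/2) = Real.sin (B/2) := by
      rw [show (π-B)/2 = π/2 - B/2 by ring, Real.cos_pi_div_two_sub]
    have h3 : Real.sin (B/2) = 3/5 := by
      apply sqeq' (Real.sin_nonneg_of_nonneg_of_le_pi (by linarith) (by linarith))
        (by norm_num)
      have hc2 : Real.cos B = 2 * Real.cos (B/2)^2 - 1 := by
        rw [show B = 2*(B/2) by ring, Real.cos_two_mul]
        ring_nf
      have hss := Real.sin_sq (B/2)
      have hcB : Real.cos B = 7/25 := cos_arctan_247
      have : Real.sin (B/2)^2 = 9/25 := by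
        rw [hcB] at hc2; linarith
      rw [this]; norm_num
    have hcos : 3/5 < Real.cos α := by
      rw [h2, h3] at h1; exact h1
    have h8 : (7/25 + 1 - 24/25 : ℝ) = 8/25 := by norm_num
    rw [h8, ge_iff_le, ← sub_nonneg]
    have expand : (Real.cos α^2 + 7/25)/(8/25) - 1 - (5/3)*Real.cos α
        = (5*Real.cos α - 3)*(15*Real.cos α + 1)/24 := by ring
    rw [expand]
    apply div_nonneg (mul_nonneg (by linarith) (by linarith)) (by norm_num)
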